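/- arXiv:1801.04005 — 6 statements merged into one kernel-verified Lean document; each statement's English description precedes it below -/
import Mathlib

section
/- Fix n ≥ 1 and δ ∈ ℝ. For every Borel measurable test φ : ℝⁿ × ℝⁿ → [0,1] there exists a Borel measurable function ψ : ℝⁿ → [0,1] such that, writing ψ̄(x,x') = ψ(x' − x), one has sup over γ of E_{P₀(γ)}[φ] ≥ sup over γ of E_{P₀(γ)}[ψ̄] and inf over γ of E_{P_δ(γ)}[φ] ≤ inf over γ of E_{P_δ(γ)}[ψ̄]; that is, a test depending only on the paired differences Y = Xᴮ − Xᴬ performs at least as well in the worst case. Moreover, if φ is symmetric in the sense that φ(x, x') = φ(−x, −x') for all x, x' ∈ ℝⁿ, then ψ can be chosen symmetric, i.e., ψ(y) = ψ(−y) for all y ∈ ℝⁿ. -/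
open MeasureTheory ProbabilityTheory Real

open scoped ENNReal NNReal

lemma pdf_conv_identity (m₁ m₂ z x : ℝ) {v₁ v₂ : ℝ≥0} (h₁ : v₁ ≠ 0) (h₂ : v₂ ≠ 0) :
    gaussianPDFReal m₁ v₁ x * gaussianPDFReal m₂ v₂ (z - x)
      = gaussianPDFReal (m₁ + m₂) (v₁ + v₂) z
        * gaussianPDFReal (m₁ + v₁ * (z - m₁ - m₂) / (v₁ + v₂)) (v₁ * v₂ / (v₁ + v₂)) x := by
  have ha : (0:ℝ) < v₁ := lt_of_le_of_ne v₁.coe_nonneg (by exact_mod_cast (Ne.symm h₁))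
  have hb : (0:ℝ) < v₂ := lt_of_le_of_ne v₂.coe_nonneg (by exact_mod_cast (Ne.symm h₂))
  have hab : (0:ℝ) < (v₁:ℝ) + v₂ := by positivity
  have hπ : (0:ℝ) < π := Real.pi_pos
  simp only [gaussianPDFReal, NNReal.coe_add, NNReal.coe_div, NNReal.coe_mul]
  rw [mul_mul_mul_comm, mul_mul_mul_comm ((√(2 * π * ((v₁:ℝ) + v₂)))⁻¹)]
  congr 1
  · rw [← mul_inv, ← mul_inv, ← Real.sqrt_mul (by positivity), ← Real.sqrt_mul (by positivity)]
    congr 1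
    field_simp
  · rw [← Real.exp_add, ← Real.exp_add]
    congr 1
    field_simp
    ring

lemma indicator_one_mul {s : Set ℝ} (f : ℝ → ℝ≥0∞) (z : ℝ) :
    s.indicator 1 z * f z = s.indicator f z := by
  by_cases h : z ∈ s <;> simp [h]

lemma gaussian_sum (m₁ m₂ : ℝ) (v₁ v₂ : ℝ≥0) :
    Measure.map (fun p : ℝ × ℝ => p.1 + p.2) ((gaussianReal m₁ v₁).prod (gaussianReal m₂ v₂))
      = gaussianReal (m₁ + m₂) (v₁ + v₂) := by
  by_cases h₁ : v₁ = 0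
  · subst h₁
    rw [gaussianReal_zero_var, Measure.dirac_prod,
      Measure.map_map measurable_add measurable_prodMk_left]
    have : (fun p : ℝ × ℝ => p.1 + p.2) ∘ Prod.mk m₁ = fun y => m₁ + y := rfl
    rw [this, gaussianReal_map_const_add, add_comm m₂ m₁, zero_add]
  by_cases h₂ : v₂ = 0
  · subst h₂
    rw [gaussianReal_zero_var, Measure.prod_dirac,
      Measure.map_map measurable_add measurable_prodMk_right]
    have : (fun p : ℝ × ℝ => p.1 + p.2) ∘ (fun x => (x, m₂)) = fun y => y + m₂ := rfl
    rw [this, gaussianReal_map_add_const, add_zero]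
  have hsum : v₁ + v₂ ≠ 0 := by positivity
  have hwne : v₁ * v₂ / (v₁ + v₂) ≠ 0 := by positivity
  set f := gaussianPDF m₁ v₁ with hf
  set g := gaussianPDF m₂ v₂ with hg
  have hfm : Measurable f := measurable_gaussianPDF _ _
  have hgm : Measurable g := measurable_gaussianPDF _ _
  ext s hs
  rw [Measure.map_apply measurable_add hs,
    gaussianReal_of_var_ne_zero _ h₁, gaussianReal_of_var_ne_zero _ h₂,
    gaussianReal_of_var_ne_zero _ hsum, withDensity_apply _ hs,
    Measure.prod_apply (measurable_add hs)]
  have inner_eq : ∀ x : ℝ,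
      (volume.withDensity g) (Prod.mk x ⁻¹' ((fun p : ℝ × ℝ => p.1 + p.2) ⁻¹' s))
        = ∫⁻ z, s.indicator 1 z * g (z - x) := by
    intro x
    have hpre : Prod.mk x ⁻¹' ((fun p : ℝ × ℝ => p.1 + p.2) ⁻¹' s)
        = (fun y => x + y) ⁻¹' s := rfl
    rw [hpre, withDensity_apply _ (measurable_const_add x hs),
      ← lintegral_indicator (measurable_const_add x hs) _]
    have heq : ∀ y : ℝ, ((fun y => x + y) ⁻¹' s).indicator g y
        = s.indicator 1 (x + y) * g ((x + y) - x) := by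
      intro y
      by_cases hy : x + y ∈ s
      · rw [Set.indicator_of_mem hy, Set.indicator_of_mem (by exact hy), add_sub_cancel_left,
          Pi.one_apply, one_mul]
      · rw [Set.indicator_of_notMem hy, Set.indicator_of_notMem (by exact hy), zero_mul]
    simp_rw [heq]
    exact lintegral_add_left_eq_self (fun z => s.indicator 1 z * g (z - x)) x
  simp_rw [← hf, ← hg, inner_eq]
  have hjoint : Measurable (Function.uncurry fun (x z : ℝ) => s.indicator 1 z * g (z - x)) :=
    ((measurable_const.indicator hs).comp measurable_snd).mul
      (hgm.comp (measurable_snd.sub measurable_fst))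
  rw [lintegral_withDensity_eq_lintegral_mul _ hfm hjoint.lintegral_prod_right]
  have step : ∀ x : ℝ, (f * fun x => ∫⁻ z, s.indicator 1 z * g (z - x)) x
      = ∫⁻ z, s.indicator 1 z * (f x * g (z - x)) := by
    intro x
    simp only [Pi.mul_apply]
    have h : Measurable fun z : ℝ => s.indicator 1 z * g (z - x) :=
      (measurable_const.indicator hs).mul (hgm.comp (measurable_id.sub_const x))
    rw [← lintegral_const_mul (f x) h]
    congr 1
    ext z
    ring
  simp_rw [step]
  rw [lintegral_lintegral_swap]
  · have conv_eq : ∀ z : ℝ, (∫⁻ x, s.indicator 1 z * (f x * g (z - x)))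
        = s.indicator 1 z * gaussianPDF (m₁ + m₂) (v₁ + v₂) z := by
      intro z
      have h : Measurable fun x : ℝ => f x * g (z - x) :=
        hfm.mul (hgm.comp (measurable_const.sub measurable_id))
      rw [lintegral_const_mul _ h]
      · congr 1
        have hx : ∀ x : ℝ, f x * g (z - x)
            = gaussianPDF (m₁ + m₂) (v₁ + v₂) z
              * gaussianPDF (m₁ + v₁ * (z - m₁ - m₂) / (v₁ + v₂)) (v₁ * v₂ / (v₁ + v₂)) x := by
          intro x
          rw [hf, hg]
          simp only [gaussianPDF, ← ENNReal.ofReal_mul (gaussianPDFReal_nonneg _ _ _)]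
          rw [pdf_conv_identity m₁ m₂ z x h₁ h₂]
        simp_rw [hx]
        rw [lintegral_const_mul _ (measurable_gaussianPDF _ _),
          lintegral_gaussianPDF_eq_one _ hwne, mul_one]
    simp_rw [conv_eq, indicator_one_mul]
    rw [lintegral_indicator hs]
  · exact ((((measurable_const.indicator hs)).comp measurable_snd).mul
      ((hfm.comp measurable_fst).mul (hgm.comp (measurable_snd.sub measurable_fst)))).aemeasurable

lemma neg_one_sq_nnreal : (⟨(-1:ℝ)^2, sq_nonneg _⟩ : ℝ≥0) = 1 := by
  ext; norm_num

lemma gaussian_map_neg (m : ℝ) (v : ℝ≥0) :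
    Measure.map Neg.neg (gaussianReal m v) = gaussianReal (-m) v := by
  have : (Neg.neg : ℝ → ℝ) = fun x => (-1 : ℝ) * x := by funext x; ring
  rw [this, gaussianReal_map_const_mul]
  congr 1
  ext; simp

lemma gaussian_diff (m₁ m₂ : ℝ) (v₁ v₂ : ℝ≥0) :
    Measure.map (fun q : ℝ × ℝ => q.2 - q.1) ((gaussianReal m₁ v₁).prod (gaussianReal m₂ v₂))
      = gaussianReal (m₂ - m₁) (v₁ + v₂) := by
  have hcomp : (fun q : ℝ × ℝ => q.2 - q.1)
      = (fun p : ℝ × ℝ => p.1 + p.2) ∘ (Prod.map id Neg.neg) ∘ Prod.swap := by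
    funext q
    simp [sub_eq_add_neg]
  rw [hcomp, ← Function.comp_assoc]
  rw [← Measure.map_map (measurable_add.comp (measurable_id.prodMap measurable_neg))
    measurable_swap]
  rw [Measure.prod_swap]
  rw [← Measure.map_map measurable_add (measurable_id.prodMap measurable_neg)]
  rw [← Measure.map_prod_map _ _ measurable_id measurable_neg, Measure.map_id,
    gaussian_map_neg, gaussian_sum, sub_eq_add_neg, add_comm v₂ v₁]

lemma map_pi_coord (n : ℕ) (g : Fin n → (ℝ × ℝ) → ℝ) (hg : ∀ i, Measurable (g i))
    (m : Fin n → Measure (ℝ × ℝ)) [∀ i, IsProbabilityMeasure (m i)] :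
    Measure.map (fun (f : Fin n → ℝ × ℝ) (i : Fin n) => g i (f i)) (Measure.pi m)
      = Measure.pi (fun i => (m i).map (g i)) := by
  haveI : ∀ i, IsProbabilityMeasure ((m i).map (g i)) :=
    fun i => Measure.isProbabilityMeasure_map (hg i).aemeasurable
  have hF : Measurable (fun (f : Fin n → ℝ × ℝ) (i : Fin n) => g i (f i)) :=
    measurable_pi_lambda _ fun i => (hg i).comp (measurable_pi_apply i)
  refine (Measure.pi_eq (μ := fun i => (m i).map (g i)) fun s hs => ?_).symm
  rw [Measure.map_apply hF (MeasurableSet.univ_pi hs)]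
  have : (fun (f : Fin n → ℝ × ℝ) (i : Fin n) => g i (f i)) ⁻¹' Set.univ.pi s
      = Set.univ.pi (fun i => g i ⁻¹' s i) := by
    ext f
    simp [Set.mem_univ_pi]
  rw [this, Measure.pi_pi]
  exact Finset.prod_congr rfl fun i _ => (Measure.map_apply (hg i) (hs i)).symm

lemma pi_dirac (n : ℕ) (a : Fin n → ℝ) :
    Measure.pi (fun i => Measure.dirac (a i)) = Measure.dirac a := by
  refine Measure.pi_eq (μ := fun i => Measure.dirac (a i)) fun s hs => ?_
  rw [Measure.dirac_apply' _ (MeasurableSet.univ_pi hs)]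
  by_cases h : ∀ i, a i ∈ s i
  · rw [Set.indicator_of_mem (Set.mem_univ_pi.mpr h)]
    rw [Finset.prod_congr rfl fun i _ => by
      rw [Measure.dirac_apply' _ (hs i), Set.indicator_of_mem (h i)]]
    simp
  · push_neg at h
    obtain ⟨i, hi⟩ := h
    rw [Set.indicator_of_notMem (by simpa [Set.mem_univ_pi] using ⟨i, hi⟩)]
    exact (Finset.prod_eq_zero (Finset.mem_univ i)
      (by rw [Measure.dirac_apply' _ (hs i), Set.indicator_of_notMem hi])).symm

lemma integral_mem_Icc_prob {α : Type*} [MeasurableSpace α] (P : Measure α)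
    [IsProbabilityMeasure P] (g : α → ℝ) (hm : AEStronglyMeasurable g P)
    (h01 : ∀ x, g x ∈ Set.Icc (0:ℝ) 1) : (∫ x, g x ∂P) ∈ Set.Icc (0:ℝ) 1 := by
  constructor
  · exact integral_nonneg fun x => (h01 x).1
  · have hint : Integrable g P := Integrable.mono' (integrable_const 1) hm
      (ae_of_all _ fun x => by
        rw [Real.norm_eq_abs, abs_of_nonneg (h01 x).1]; exact (h01 x).2)
    calc (∫ x, g x ∂P) ≤ ∫ _, (1:ℝ) ∂P := integral_mono hint (integrable_const 1)
          fun x => (h01 x).2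
      _ = 1 := by simp

/-- Nuisance parameters γ = (ν, μ, ρ) with μᵢ > 0 and ρᵢ ∈ [0,1]. -/
structure NuisParam (n : ℕ) where
  ν : Fin n → ℝ
  μ : Fin n → ℝ
  ρ : Fin n → ℝ
  hμ : ∀ i, 0 < μ i
  hρ : ∀ i, ρ i ∈ Set.Icc (0:ℝ) 1

/-- The law P_δ(γ) on ℝⁿ × ℝⁿ of (Xᴬ, Xᴮ) with Xᴬᵢ ~ N(νᵢ, ρᵢμᵢ²),
Xᴮᵢ ~ N(νᵢ + δμᵢ, (1−ρᵢ)μᵢ²), all coordinates independent. -/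
noncomputable def Pdist (n : ℕ) (δ : ℝ) (γ : NuisParam n) :
    Measure ((Fin n → ℝ) × (Fin n → ℝ)) :=
  (Measure.pi fun i => gaussianReal (γ.ν i) ((γ.ρ i * γ.μ i ^ 2).toNNReal)).prod
    (Measure.pi fun i => gaussianReal (γ.ν i + δ * γ.μ i) (((1 - γ.ρ i) * γ.μ i ^ 2).toNNReal))

instance Pdist_prob (n : ℕ) (δ : ℝ) (γ : NuisParam n) : IsProbabilityMeasure (Pdist n δ γ) := by
  unfold Pdist; infer_instance

/-- The nuisance parameter with ν = 0, ρ = 0 and the same μ. -/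
def NuisParam.degen {n : ℕ} (γ : NuisParam n) : NuisParam n :=
  ⟨0, γ.μ, 0, γ.hμ, fun i => by simp⟩

lemma law_diff (n : ℕ) (δ : ℝ) (γ : NuisParam n) :
    Measure.map (fun x : (Fin n → ℝ) × (Fin n → ℝ) => x.2 - x.1) (Pdist n δ γ)
      = Measure.pi (fun i => gaussianReal (δ * γ.μ i) ((γ.μ i ^ 2).toNNReal)) := by
  set a := fun i => gaussianReal (γ.ν i) ((γ.ρ i * γ.μ i ^ 2).toNNReal) with ha
  set b := fun i => gaussianReal (γ.ν i + δ * γ.μ i) (((1 - γ.ρ i) * γ.μ i ^ 2).toNNReal) with hb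
  have hprod : Pdist n δ γ
      = Measure.map (MeasurableEquiv.arrowProdEquivProdArrow ℝ ℝ (Fin n))
        (Measure.pi fun i => (a i).prod (b i)) :=
    (measurePreserving_arrowProdEquivProdArrow ℝ ℝ (Fin n) a b).map_eq.symm
  rw [hprod, Measure.map_map (show Measurable (fun x : (Fin n → ℝ) × (Fin n → ℝ) => x.2 - x.1) from measurable_snd.sub measurable_fst)
    (MeasurableEquiv.arrowProdEquivProdArrow ℝ ℝ (Fin n)).measurable]
  have hcomp : (fun x : (Fin n → ℝ) × (Fin n → ℝ) => x.2 - x.1)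
        ∘ (MeasurableEquiv.arrowProdEquivProdArrow ℝ ℝ (Fin n))
      = fun (f : Fin n → ℝ × ℝ) (i : Fin n) => (fun q : ℝ × ℝ => q.2 - q.1) (f i) := by
    funext f
    rfl
  rw [hcomp, map_pi_coord n (fun _ q => q.2 - q.1) (fun i => measurable_snd.sub measurable_fst) _]
  congr 1
  funext i
  rw [gaussian_diff, add_sub_cancel_left]
  congr 1
  have h0 : 0 ≤ γ.ρ i := (γ.hρ i).1
  have h1 : γ.ρ i ≤ 1 := (γ.hρ i).2
  have hsq : (0:ℝ) ≤ γ.μ i ^ 2 := sq_nonneg _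
  rw [← Real.toNNReal_add (by positivity) (by nlinarith)]
  congr 1
  ring

lemma Pdist_degen (n : ℕ) (δ : ℝ) (γ : NuisParam n) :
    Pdist n δ γ.degen
      = Measure.map (Prod.mk (0 : Fin n → ℝ))
          (Measure.pi fun i => gaussianReal (δ * γ.μ i) ((γ.μ i ^ 2).toNNReal)) := by
  rw [← Measure.dirac_prod]
  unfold Pdist NuisParam.degen
  congr 1
  · rw [← pi_dirac n 0]
    congr 1
    funext i
    simp
  · congr 1
    funext i
    simp

/-- Reduction to tests of the paired differences: for any Borel test φ(Xᴬ, Xᴮ) there is a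
Borel test ψ(Y) of Y = Xᴮ − Xᴬ with no larger worst-case size and no smaller worst-case
power; moreover if φ is symmetric then ψ can be chosen symmetric. -/
theorem reduce_to_paired_differences (n : ℕ) (hn : 1 ≤ n) (δ : ℝ)
    (φ : (Fin n → ℝ) × (Fin n → ℝ) → ℝ) (hφ : Measurable φ)
    (hφ01 : ∀ x, φ x ∈ Set.Icc (0:ℝ) 1) :
    ∃ ψ : (Fin n → ℝ) → ℝ, Measurable ψ ∧ (∀ y, ψ y ∈ Set.Icc (0:ℝ) 1) ∧
      (⨆ γ : NuisParam n, ∫ x, ψ (x.2 - x.1) ∂(Pdist n 0 γ))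
          ≤ (⨆ γ : NuisParam n, ∫ x, φ x ∂(Pdist n 0 γ)) ∧
      (⨅ γ : NuisParam n, ∫ x, φ x ∂(Pdist n δ γ))
          ≤ (⨅ γ : NuisParam n, ∫ x, ψ (x.2 - x.1) ∂(Pdist n δ γ)) ∧
      ((∀ x x' : Fin n → ℝ, φ (x, x') = φ (-x, -x')) → ∀ y : Fin n → ℝ, ψ y = ψ (-y)) := by
  set ψ : (Fin n → ℝ) → ℝ := fun y => φ (0, y) with hψ
  have hψm : Measurable ψ := hφ.comp (measurable_const.prodMk measurable_id)
  have hS : Measurable (fun x : (Fin n → ℝ) × (Fin n → ℝ) => x.2 - x.1) :=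
    measurable_snd.sub measurable_fst
  have key : ∀ (δ' : ℝ) (γ : NuisParam n),
      (∫ x, ψ (x.2 - x.1) ∂(Pdist n δ' γ)) = ∫ x, φ x ∂(Pdist n δ' γ.degen) := by
    intro δ' γ
    rw [← integral_map hS.aemeasurable hψm.aestronglyMeasurable, law_diff n δ' γ,
      Pdist_degen n δ' γ,
      integral_map measurable_prodMk_left.aemeasurable hφ.aestronglyMeasurable]
  haveI : Nonempty (NuisParam n) :=
    ⟨⟨0, fun _ => 1, 0, fun _ => one_pos, fun i => by simp⟩⟩
  refine ⟨ψ, hψm, fun y => hφ01 _, ?_, ?_, ?_⟩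
  · have hba : BddAbove (Set.range fun γ : NuisParam n => ∫ x, φ x ∂(Pdist n 0 γ)) := by
      refine ⟨1, ?_⟩
      rintro r ⟨γ', rfl⟩
      exact (integral_mem_Icc_prob (Pdist n 0 γ') φ hφ.aestronglyMeasurable hφ01).2
    refine ciSup_le fun γ => ?_
    rw [key 0 γ]
    exact le_ciSup hba γ.degen
  · have hbb : BddBelow (Set.range fun γ : NuisParam n => ∫ x, φ x ∂(Pdist n δ γ)) := by
      refine ⟨0, ?_⟩
      rintro r ⟨γ', rfl⟩
      exact (integral_mem_Icc_prob (Pdist n δ γ') φ hφ.aestronglyMeasurable hφ01).1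
    refine le_ciInf fun γ => ?_
    rw [key δ γ]
    exact ciInf_le hbb γ.degen
  · intro hsym y
    show φ (0, y) = φ (0, -y)
    simpa using hsym 0 y
end

section
/- Let c > 0, z ∈ ℝ and c_v ≥ π/2 − 1. Then Q( z − √(2/π)·c ) ≥ Q( z − c/√(1 + c_v) ), where Q(x) = 1 − Φ(x) and Φ is the standard normal CDF. Consequently, the asymptotic power Q(z_{α/2} − √(2/π)·√n·δ) of the two-sided sign test is at least the asymptotic power Q(z_{α/2} − √n·δ/√(1 + c_v)) of the two-sided paired t-test whenever the coefficient of variation satisfies c_v ≥ π/2 − 1. -/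
open MeasureTheory ProbabilityTheory Real

/-- The standard normal CDF Φ. -/
noncomputable def stdGaussCDF (x : ℝ) : ℝ := ((gaussianReal 0 1) (Set.Iic x)).toReal

/-- The standard normal tail function Q(x) = 1 − Φ(x). -/
noncomputable def gaussTail (x : ℝ) : ℝ := 1 - stdGaussCDF x

lemma stdGaussCDF_mono : Monotone stdGaussCDF := by
  intro x y hxy
  unfold stdGaussCDF
  have h := measure_mono (μ := gaussianReal 0 1) (Set.Iic_subset_Iic.mpr hxy)
  exact ENNReal.toReal_mono (measure_ne_top _ _) h

/-- If the coefficient of variation satisfies c_v ≥ π/2 − 1, then the asymptotic power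
Q(z − √(2/π)·c) of the sign test is at least the asymptotic power Q(z − c/√(1 + c_v))
of the paired t-test. -/
theorem sign_beats_t_test (c z cv : ℝ) (hc : 0 < c) (hcv : Real.pi / 2 - 1 ≤ cv) :
    gaussTail (z - c / Real.sqrt (1 + cv)) ≤ gaussTail (z - Real.sqrt (2 / Real.pi) * c) := by
  have hpi := Real.pi_pos
  have h1 : (0:ℝ) < Real.pi / 2 := by linarith
  have h2 : Real.pi / 2 ≤ 1 + cv := by linarith
  have hkey : c / Real.sqrt (1 + cv) ≤ Real.sqrt (2 / Real.pi) * c := by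
    have hs1 : Real.sqrt (Real.pi / 2) ≤ Real.sqrt (1 + cv) :=
      Real.sqrt_le_sqrt h2
    have hs2 : 0 < Real.sqrt (Real.pi / 2) := Real.sqrt_pos.mpr h1
    have hinv : 1 / Real.sqrt (1 + cv) ≤ 1 / Real.sqrt (Real.pi / 2) :=
      one_div_le_one_div_of_le hs2 hs1
    have heq : 1 / Real.sqrt (Real.pi / 2) = Real.sqrt (2 / Real.pi) := by
      rw [one_div, ← Real.sqrt_inv]
      congr 1
      field_simp
    calc c / Real.sqrt (1 + cv) = c * (1 / Real.sqrt (1 + cv)) := by ring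
      _ ≤ c * (1 / Real.sqrt (Real.pi / 2)) := by
          exact mul_le_mul_of_nonneg_left hinv hc.le
      _ = Real.sqrt (2 / Real.pi) * c := by rw [heq]; ring
  have hx : z - Real.sqrt (2 / Real.pi) * c ≤ z - c / Real.sqrt (1 + cv) := by linarith
  unfold gaussTail
  have := stdGaussCDF_mono hx
  linarith
end

section
/- Fix δ > 0. For μ > 0 let g₀(y; μ) and g₁(y; μ) denote the densities at y ∈ ℝ of N(0, μ²) and N(δμ, μ²) respectively. Then for every y > 0, the ratio (∫_{1/k}^{k} g₁(y; μ)·μ⁻¹ dμ) / (∫_{1/k}^{k} g₀(y; μ)·μ⁻¹ dμ) converges to 2·Φ(δ) as k → ∞, and for every y < 0 it converges to 2·(1 − Φ(δ)), where Φ is the standard normal CDF. That is, under the sequence of priors proportional to 1/μ on (1/k, k), the likelihood ratio of a single paired difference asymptotically depends only on its sign. -/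
open MeasureTheory ProbabilityTheory Real

/-- The mixture density at y of the scale family, under the prior proportional to 1/μ on
(1/k, k): ∫_{1/k}^k g(y; μ)·μ⁻¹ dμ, where g(·; μ) is the density of N(δ'μ, μ²). -/
noncomputable def mixtureDensity (δ' : ℝ) (k : ℕ) (y : ℝ) : ℝ :=
  ∫ μ in ((k : ℝ)⁻¹)..(k : ℝ), gaussianPDFReal (δ' * μ) ((μ ^ 2).toNNReal) y / μ

open Filter

lemma continuous_gaussianPDFReal (m : ℝ) (v : NNReal) : Continuous (gaussianPDFReal m v) := by
  unfold gaussianPDFReal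
  fun_prop

lemma stdGaussCDF_eq (x : ℝ) :
    stdGaussCDF x = ∫ t in Set.Iic x, gaussianPDFReal 0 1 t := by
  rw [stdGaussCDF, gaussianReal_apply_eq_integral 0 one_ne_zero,
    ENNReal.toReal_ofReal
      (setIntegral_nonneg measurableSet_Iic fun t _ => gaussianPDFReal_nonneg _ _ _)]

lemma g_shift (δ' t : ℝ) : gaussianPDFReal δ' 1 t = gaussianPDFReal 0 1 (t - δ') := by
  rw [gaussianPDFReal_sub, zero_add]

lemma Iic_integral (δ' c : ℝ) :
    ∫ t in Set.Iic c, gaussianPDFReal δ' 1 t = stdGaussCDF (c - δ') := by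
  rw [stdGaussCDF_eq]
  simp_rw [g_shift δ']
  rw [← integral_indicator measurableSet_Iic, ← integral_indicator measurableSet_Iic]
  have : (fun t => (Set.Iic c).indicator (fun t => gaussianPDFReal 0 1 (t - δ')) t)
      = fun t => ((Set.Iic (c - δ')).indicator (gaussianPDFReal 0 1)) (t - δ') := by
    funext t
    simp only [Set.indicator_apply, Set.mem_Iic, sub_le_sub_iff_right]
  rw [this, integral_sub_right_eq_self (μ := volume) _ δ']

lemma Ioi_integral (δ' c : ℝ) :
    ∫ t in Set.Ioi c, gaussianPDFReal δ' 1 t = 1 - stdGaussCDF (c - δ') := by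
  have h := integral_add_compl (μ := volume) (f := gaussianPDFReal δ' 1)
    (measurableSet_Iic (a := c)) (integrable_gaussianPDFReal δ' 1)
  rw [Set.compl_Iic, integral_gaussianPDFReal_eq_one δ' one_ne_zero, Iic_integral] at h
  linarith

lemma g_even (x : ℝ) : gaussianPDFReal 0 1 (-x) = gaussianPDFReal 0 1 x := by
  simp [gaussianPDFReal, neg_sq]

lemma stdGauss_symm (c : ℝ) : stdGaussCDF (-c) = 1 - stdGaussCDF c := by
  have h := integral_comp_neg_Iic (-c) (gaussianPDFReal 0 1)
  simp_rw [g_even, neg_neg] at h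
  rw [stdGaussCDF_eq, h, Ioi_integral, sub_zero]

lemma stdGauss_zero : stdGaussCDF 0 = 1/2 := by
  have := stdGauss_symm 0
  rw [neg_zero] at this
  linarith

lemma pdf_scale {μ : ℝ} (hμ : 0 < μ) (δ' y : ℝ) :
    gaussianPDFReal (δ' * μ) ((μ^2).toNNReal) y / μ
      = (μ^2)⁻¹ * gaussianPDFReal δ' 1 (μ⁻¹ * y) := by
  have h := gaussianPDFReal_inv_mul (μ := δ') (v := 1) (c := μ) hμ.ne' y
  rw [abs_of_pos hμ] at h
  have hv : (NNReal.mk (μ^2) (sq_nonneg _) * 1 : NNReal) = (μ^2).toNNReal := by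
    ext
    simp [Real.coe_toNNReal _ (sq_nonneg μ)]
  rw [hv, mul_comm μ δ'] at h
  rw [h]
  field_simp

lemma mixture_eq (δ' y : ℝ) (hy : y ≠ 0) {k : ℕ} (hk : 1 ≤ k) :
    mixtureDensity δ' k y
      = y⁻¹ * ∫ t in (y * (k : ℝ)⁻¹)..(y * (k : ℝ)), gaussianPDFReal δ' 1 t := by
  have hk1 : (1:ℝ) ≤ (k:ℝ) := by exact_mod_cast hk
  have hkpos : (0:ℝ) < (k:ℝ) := lt_of_lt_of_le one_pos hk1
  have hle : (k:ℝ)⁻¹ ≤ (k:ℝ) := le_trans (inv_le_one_of_one_le₀ hk1) hk1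
  have hmem : ∀ μ ∈ Set.uIcc ((k:ℝ)⁻¹) (k:ℝ), 0 < μ := by
    intro μ hμ
    rw [Set.uIcc_of_le hle] at hμ
    exact lt_of_lt_of_le (inv_pos.mpr hkpos) hμ.1
  rw [mixtureDensity,
    intervalIntegral.integral_congr
      (g := fun μ => (-y⁻¹) * ((-(y * (μ^2)⁻¹)) • gaussianPDFReal δ' 1 (y * μ⁻¹)))
      (fun μ hμ => by
        rw [pdf_scale (hmem μ hμ) δ' y]
        simp only [smul_eq_mul]
        have h2 : (μ:ℝ) ≠ 0 := (hmem μ hμ).ne'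
        field_simp),
    intervalIntegral.integral_const_mul]
  have hsub : ∀ x ∈ Set.uIcc ((k:ℝ)⁻¹) (k:ℝ),
      HasDerivAt (fun μ : ℝ => y * μ⁻¹) (-(y * (x^2)⁻¹)) x := by
    intro x hx
    have h := (hasDerivAt_inv (hmem x hx).ne').const_mul y
    rw [show -(y * (x^2)⁻¹) = y * -(x^2)⁻¹ by ring]
    exact h
  have hcont : ContinuousOn (fun x : ℝ => -(y * (x^2)⁻¹)) (Set.uIcc ((k:ℝ)⁻¹) (k:ℝ)) := by
    refine ContinuousOn.neg (ContinuousOn.mul continuousOn_const (ContinuousOn.inv₀ ?_ ?_))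
    · fun_prop
    · exact fun x hx => pow_ne_zero 2 (hmem x hx).ne'
  have hkey := intervalIntegral.integral_comp_smul_deriv hsub hcont
    (continuous_gaussianPDFReal δ' 1)
  simp only [Function.comp] at hkey
  rw [hkey, inv_inv]
  rw [intervalIntegral.integral_symm]
  ring

lemma tendsto_inv_nat : Tendsto (fun k : ℕ => ((k : ℝ))⁻¹) atTop (nhds 0) :=
  tendsto_natCast_atTop_atTop.inv_tendsto_atTop

lemma tendsto_piece1 (δ' y : ℝ) :
    Tendsto (fun k : ℕ => ∫ t in (y * (k : ℝ)⁻¹)..y, gaussianPDFReal δ' 1 t) atTop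
      (nhds (∫ t in (0:ℝ)..y, gaussianPDFReal δ' 1 t)) := by
  have hint := integrable_gaussianPDFReal δ' 1
  have hc : Continuous (fun b => ∫ t in y..b, gaussianPDFReal δ' 1 t) :=
    hint.continuous_primitive y
  have h0 : Tendsto (fun k : ℕ => y * (k : ℝ)⁻¹) atTop (nhds 0) := by
    simpa using tendsto_inv_nat.const_mul y
  have h := ((hc.tendsto 0).comp h0).neg
  simp only [Function.comp] at h
  have heq : ∀ k : ℕ, -(∫ t in y..(y * (k:ℝ)⁻¹), gaussianPDFReal δ' 1 t)
      = ∫ t in (y * (k:ℝ)⁻¹)..y, gaussianPDFReal δ' 1 t := fun k =>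
    (intervalIntegral.integral_symm _ _).symm
  simp_rw [heq] at h
  have hval : -(∫ t in y..(0:ℝ), gaussianPDFReal δ' 1 t)
      = ∫ t in (0:ℝ)..y, gaussianPDFReal δ' 1 t := (intervalIntegral.integral_symm _ _).symm
  rwa [hval] at h

lemma tendsto_mixture_pos (δ' : ℝ) {y : ℝ} (hy : 0 < y) :
    Tendsto (fun k : ℕ => mixtureDensity δ' k y) atTop
      (nhds (y⁻¹ * (1 - stdGaussCDF (-δ')))) := by
  have hint := integrable_gaussianPDFReal δ' 1
  have h2 : Tendsto (fun k : ℕ => ∫ t in y..(y * (k:ℝ)), gaussianPDFReal δ' 1 t) atTop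
      (nhds (∫ t in Set.Ioi y, gaussianPDFReal δ' 1 t)) :=
    intervalIntegral_tendsto_integral_Ioi y hint.integrableOn
      (Tendsto.const_mul_atTop hy tendsto_natCast_atTop_atTop)
  have hJ : Tendsto (fun k : ℕ => ∫ t in (y * (k:ℝ)⁻¹)..(y * (k:ℝ)), gaussianPDFReal δ' 1 t)
      atTop (nhds ((∫ t in (0:ℝ)..y, gaussianPDFReal δ' 1 t)
        + ∫ t in Set.Ioi y, gaussianPDFReal δ' 1 t)) := by
    have hsplit : ∀ k : ℕ, (∫ t in (y * (k:ℝ)⁻¹)..(y * (k:ℝ)), gaussianPDFReal δ' 1 t)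
        = (∫ t in (y * (k:ℝ)⁻¹)..y, gaussianPDFReal δ' 1 t)
          + ∫ t in y..(y * (k:ℝ)), gaussianPDFReal δ' 1 t := fun k =>
      (intervalIntegral.integral_add_adjacent_intervals hint.intervalIntegrable
        hint.intervalIntegrable).symm
    simp_rw [hsplit]
    exact (tendsto_piece1 δ' y).add h2
  have hval : (∫ t in (0:ℝ)..y, gaussianPDFReal δ' 1 t)
      + (∫ t in Set.Ioi y, gaussianPDFReal δ' 1 t) = 1 - stdGaussCDF (-δ') := by
    rw [intervalIntegral.integral_of_le hy.le,
      ← setIntegral_union (Set.Ioc_disjoint_Ioi le_rfl) measurableSet_Ioi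
        hint.integrableOn hint.integrableOn, Set.Ioc_union_Ioi_eq_Ioi hy.le,
      Ioi_integral, zero_sub]
  rw [← hval]
  refine Tendsto.congr' ?_ (hJ.const_mul y⁻¹)
  filter_upwards [eventually_ge_atTop 1] with k hk
  exact (mixture_eq δ' y hy.ne' hk).symm

lemma tendsto_mixture_neg (δ' : ℝ) {y : ℝ} (hy : y < 0) :
    Tendsto (fun k : ℕ => mixtureDensity δ' k y) atTop
      (nhds (-y⁻¹ * stdGaussCDF (-δ'))) := by
  have hint := integrable_gaussianPDFReal δ' 1
  have h2 : Tendsto (fun k : ℕ => ∫ t in y..(y * (k:ℝ)), gaussianPDFReal δ' 1 t) atTop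
      (nhds (-(∫ t in Set.Iic y, gaussianPDFReal δ' 1 t))) := by
    have hb : Tendsto (fun k : ℕ => y * (k:ℝ)) atTop atBot :=
      (tendsto_const_mul_atBot_of_neg hy).mpr tendsto_natCast_atTop_atTop
    have h := (intervalIntegral_tendsto_integral_Iic y hint.integrableOn hb).neg
    have heq : ∀ k : ℕ, -(∫ t in (y * (k:ℝ))..y, gaussianPDFReal δ' 1 t)
        = ∫ t in y..(y * (k:ℝ)), gaussianPDFReal δ' 1 t := fun k =>
      (intervalIntegral.integral_symm _ _).symm
    simpa only [heq] using h
  have hJ : Tendsto (fun k : ℕ => ∫ t in (y * (k:ℝ)⁻¹)..(y * (k:ℝ)), gaussianPDFReal δ' 1 t)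
      atTop (nhds ((∫ t in (0:ℝ)..y, gaussianPDFReal δ' 1 t)
        + -(∫ t in Set.Iic y, gaussianPDFReal δ' 1 t))) := by
    have hsplit : ∀ k : ℕ, (∫ t in (y * (k:ℝ)⁻¹)..(y * (k:ℝ)), gaussianPDFReal δ' 1 t)
        = (∫ t in (y * (k:ℝ)⁻¹)..y, gaussianPDFReal δ' 1 t)
          + ∫ t in y..(y * (k:ℝ)), gaussianPDFReal δ' 1 t := fun k =>
      (intervalIntegral.integral_add_adjacent_intervals hint.intervalIntegrable
        hint.intervalIntegrable).symm
    simp_rw [hsplit]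
    exact (tendsto_piece1 δ' y).add h2
  have hval : (∫ t in (0:ℝ)..y, gaussianPDFReal δ' 1 t)
      + -(∫ t in Set.Iic y, gaussianPDFReal δ' 1 t) = -(stdGaussCDF (-δ')) := by
    have h1 : (∫ t in Set.Iic y, gaussianPDFReal δ' 1 t)
        + (∫ t in Set.Ioc y 0, gaussianPDFReal δ' 1 t) = stdGaussCDF (-δ') := by
      rw [← setIntegral_union (Set.Iic_disjoint_Ioc le_rfl) measurableSet_Ioc
        hint.integrableOn hint.integrableOn, Set.Iic_union_Ioc_eq_Iic hy.le,
        Iic_integral δ' 0, zero_sub]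
    rw [intervalIntegral.integral_symm, intervalIntegral.integral_of_le hy.le]
    linarith
  rw [hval] at hJ
  have hfin := hJ.const_mul y⁻¹
  rw [show y⁻¹ * -(stdGaussCDF (-δ')) = -y⁻¹ * stdGaussCDF (-δ') by ring] at hfin
  refine Tendsto.congr' ?_ hfin
  filter_upwards [eventually_ge_atTop 1] with k hk
  exact (mixture_eq δ' y hy.ne hk).symm

/-- Under the sequence of priors proportional to 1/μ on (1/k, k), the likelihood ratio of
a single paired difference asymptotically depends only on its sign: for y > 0 it converges
to 2Φ(δ), and for y < 0 it converges to 2(1 − Φ(δ)). -/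
theorem likelihood_ratio_tendsto_sign (δ : ℝ) (hδ : 0 < δ) :
    (∀ y : ℝ, 0 < y →
      Filter.Tendsto (fun k : ℕ => mixtureDensity δ k y / mixtureDensity 0 k y)
        Filter.atTop (nhds (2 * stdGaussCDF δ))) ∧
    (∀ y : ℝ, y < 0 →
      Filter.Tendsto (fun k : ℕ => mixtureDensity δ k y / mixtureDensity 0 k y)
        Filter.atTop (nhds (2 * (1 - stdGaussCDF δ)))) := by
  constructor
  · intro y hy
    have hnum := tendsto_mixture_pos δ hy
    have hden := tendsto_mixture_pos 0 hy
    rw [neg_zero, stdGauss_zero] at hden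
    have hne : y⁻¹ * (1 - 1/2) ≠ 0 :=
      mul_ne_zero (inv_ne_zero hy.ne') (by norm_num)
    have h := hnum.div hden hne
    have hval : (y⁻¹ * (1 - stdGaussCDF (-δ))) / (y⁻¹ * (1 - 1/2)) = 2 * stdGaussCDF δ := by
      rw [stdGauss_symm]
      have : y⁻¹ ≠ 0 := inv_ne_zero hy.ne'
      field_simp
      ring
    rwa [hval] at h
  · intro y hy
    have hnum := tendsto_mixture_neg δ hy
    have hden := tendsto_mixture_neg 0 hy
    rw [neg_zero, stdGauss_zero] at hden
    have hne : -y⁻¹ * (1/2) ≠ 0 := by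
      refine mul_ne_zero (neg_ne_zero.mpr (inv_ne_zero hy.ne)) (by norm_num)
    have h := hnum.div hden hne
    have hval : (-y⁻¹ * stdGaussCDF (-δ)) / (-y⁻¹ * (1/2)) = 2 * (1 - stdGaussCDF δ) := by
      rw [stdGauss_symm]
      rw [mul_div_mul_left _ _ (neg_ne_zero.mpr (inv_ne_zero hy.ne))]
      ring
    rwa [hval] at h
end

section
/- Fix n ≥ 1, δ > 0 and μ ∈ (0,∞)ⁿ. Let f₀(y) = ∏ᵢ g₀(yᵢ; μᵢ) and f₁(y) = ∏ᵢ g₁(yᵢ; μᵢ) for y ∈ ℝⁿ, where g₀(·; μ) and g₁(·; μ) are the densities of N(0, μ²) and N(δμ, μ²). Then for every y ∈ ℝⁿ with f₁(y) ≤ f₁(−y), one has f₁(y)/f₀(y) ≤ exp(−nδ²/2). Equivalently, on the set where the alternative density is no larger than its reflection, the likelihood ratio against the null is at most exp(−nδ²/2). -/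
open MeasureTheory ProbabilityTheory Real

/-- The alternative joint density f₁(y) = ∏ᵢ g₁(yᵢ; μᵢ), with g₁(·; μ) the density of
N(δμ, μ²). -/
noncomputable def altDensity (n : ℕ) (δ : ℝ) (μ : Fin n → ℝ) (y : Fin n → ℝ) : ℝ :=
  ∏ i, gaussianPDFReal (δ * μ i) ((μ i ^ 2).toNNReal) (y i)

/-- The null joint density f₀(y) = ∏ᵢ g₀(yᵢ; μᵢ), with g₀(·; μ) the density of N(0, μ²). -/
noncomputable def nullDensity (n : ℕ) (μ : Fin n → ℝ) (y : Fin n → ℝ) : ℝ :=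
  ∏ i, gaussianPDFReal 0 ((μ i ^ 2).toNNReal) (y i)

lemma gauss_ratio (δ m x : ℝ) (hm : 0 < m) :
    gaussianPDFReal (δ * m) ((m ^ 2).toNNReal) x
      = gaussianPDFReal 0 ((m ^ 2).toNNReal) x * Real.exp (δ * (x / m) - δ ^ 2 / 2) := by
  unfold gaussianPDFReal
  have hc : (((m ^ 2).toNNReal) : ℝ) = m ^ 2 := Real.coe_toNNReal _ (sq_nonneg m)
  rw [hc, mul_assoc ((√(2 * π * m ^ 2))⁻¹), ← Real.exp_add]
  congr 1
  have hm2 : (m : ℝ) ^ 2 ≠ 0 := by positivity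
  field_simp
  ring

lemma alt_eq (n : ℕ) (δ : ℝ) (μ : Fin n → ℝ) (hμ : ∀ i, 0 < μ i) (y : Fin n → ℝ) :
    altDensity n δ μ y = nullDensity n μ y *
      Real.exp (δ * (∑ i, y i / μ i) - n * δ ^ 2 / 2) := by
  unfold altDensity nullDensity
  simp_rw [fun i => gauss_ratio δ (μ i) (y i) (hμ i)]
  rw [Finset.prod_mul_distrib, ← Real.exp_sum]
  congr 1
  rw [Finset.sum_sub_distrib, ← Finset.mul_sum]
  simp [Finset.card_fin]
  ring

/-- On the set where the alternative density is no larger than its reflection, the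
likelihood ratio against the null is at most exp(−nδ²/2). -/
theorem likelihood_ratio_bound_on_reflected_region (n : ℕ) (hn : 1 ≤ n)
    (δ : ℝ) (hδ : 0 < δ) (μ : Fin n → ℝ) (hμ : ∀ i, 0 < μ i)
    (y : Fin n → ℝ) (h : altDensity n δ μ y ≤ altDensity n δ μ (-y)) :
    altDensity n δ μ y / nullDensity n μ y ≤ Real.exp (-(n * δ ^ 2) / 2) := by
  have hnull : 0 < nullDensity n μ y := by
    apply Finset.prod_pos
    intro i _
    apply gaussianPDFReal_pos
    simp only [ne_eq, Real.toNNReal_eq_zero, not_le]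
    exact pow_pos (hμ i) 2
  have hnullneg : nullDensity n μ (-y) = nullDensity n μ y := by
    unfold nullDensity
    congr 1
    ext i
    show gaussianPDFReal 0 _ (-(y i)) = _
    unfold gaussianPDFReal
    congr 2
    ring
  rw [alt_eq n δ μ hμ y, alt_eq n δ μ hμ (-y), hnullneg] at h
  have hS : ∑ i, (-y) i / μ i = -(∑ i, y i / μ i) := by
    rw [← Finset.sum_neg_distrib]
    congr 1; ext i; rw [show (-y) i = -(y i) from rfl]; ring
  rw [hS] at h
  have hexp : Real.exp (δ * ∑ i, y i / μ i - n * δ ^ 2 / 2)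
      ≤ Real.exp (δ * -(∑ i, y i / μ i) - n * δ ^ 2 / 2) :=
    le_of_mul_le_mul_left (by linarith [h]) hnull
  have hSle : (∑ i, y i / μ i) ≤ 0 := by
    have := Real.exp_le_exp.mp hexp
    nlinarith
  rw [alt_eq n δ μ hμ y, mul_comm, mul_div_assoc, div_self hnull.ne', mul_one,
    Real.exp_le_exp]
  nlinarith
end

section
/- Fix n ≥ 1, δ > 0 and μ ∈ (0,∞)ⁿ. Let f₀ and f₁ be the densities on ℝⁿ given by f₀(y) = ∏ᵢ g₀(yᵢ; μᵢ) and f₁(y) = ∏ᵢ g₁(yᵢ; μᵢ), where g₀(·; μ) and g₁(·; μ) are the densities of N(0, μ²) and N(δμ, μ²), and let Y⁻ = { y ∈ ℝⁿ : f₁(y) < f₁(−y) }. Then for every Borel measurable φ : ℝⁿ → [0,1], ∫_{Y⁻} φ(y)·f₁(y) dy ≤ exp(−nδ²/2) · ∫_{Y⁻} φ(y)·f₀(y) dy. In particular, if ∫_{Y⁻} φ·f₀ ≤ α/2 then ∫_{Y⁻} φ·f₁ ≤ (α/2)·exp(−nδ²/2). -/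
open MeasureTheory ProbabilityTheory Real

/-- The region Y⁻ where the alternative density is strictly smaller than its value at the
reflected point. -/
def reflNegRegion (n : ℕ) (δ : ℝ) (μ : Fin n → ℝ) : Set (Fin n → ℝ) :=
  {y | altDensity n δ μ y < altDensity n δ μ (-y)}

lemma factor_eq (δ m y : ℝ) (hm : m ≠ 0) :
    gaussianPDFReal (δ * m) ((m ^ 2).toNNReal) y
      * gaussianPDFReal (δ * m) ((m ^ 2).toNNReal) (-y)
    = Real.exp (-δ ^ 2) * (gaussianPDFReal 0 ((m ^ 2).toNNReal) y) ^ 2 := by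
  have hm2 : (((m ^ 2).toNNReal) : ℝ) = m ^ 2 := Real.coe_toNNReal _ (sq_nonneg m)
  have key : ∀ s e0 e1 e2 e3 : ℝ, e1 * e2 = e0 * e3 ^ 2 →
      (s * e1) * (s * e2) = e0 * (s * e3) ^ 2 := by
    intro s e0 e1 e2 e3 h
    linear_combination s ^ 2 * h
  have hE : ∀ a b c d : ℝ, a + b = d + (c + c) → rexp a * rexp b = rexp d * rexp c ^ 2 := by
    intro a b c d h
    rw [pow_two, ← Real.exp_add, ← Real.exp_add, ← Real.exp_add, h]
  simp only [gaussianPDFReal, hm2, sub_zero]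
  refine key _ _ _ _ _ (hE _ _ _ _ ?_)
  have hm2' : m ^ 2 ≠ 0 := pow_ne_zero 2 hm
  field_simp
  ring

lemma alt_nonneg (n : ℕ) (δ : ℝ) (μ : Fin n → ℝ) (y : Fin n → ℝ) :
    0 ≤ altDensity n δ μ y :=
  Finset.prod_nonneg fun i _ => gaussianPDFReal_nonneg _ _ _

lemma null_nonneg (n : ℕ) (μ : Fin n → ℝ) (y : Fin n → ℝ) :
    0 ≤ nullDensity n μ y :=
  Finset.prod_nonneg fun i _ => gaussianPDFReal_nonneg _ _ _

lemma alt_mul_alt_neg (n : ℕ) (δ : ℝ) (μ : Fin n → ℝ) (hμ : ∀ i, 0 < μ i) (y : Fin n → ℝ) :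
    altDensity n δ μ y * altDensity n δ μ (-y)
      = Real.exp (-(n * δ ^ 2)) * (nullDensity n μ y) ^ 2 := by
  unfold altDensity nullDensity
  rw [← Finset.prod_mul_distrib]
  have : ∀ i ∈ Finset.univ, gaussianPDFReal (δ * μ i) ((μ i ^ 2).toNNReal) (y i)
      * gaussianPDFReal (δ * μ i) ((μ i ^ 2).toNNReal) ((-y) i)
      = Real.exp (-δ ^ 2) * (gaussianPDFReal 0 ((μ i ^ 2).toNNReal) (y i)) ^ 2 := by
    intro i _
    have := factor_eq δ (μ i) (y i) (hμ i).ne'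
    simpa using this
  rw [Finset.prod_congr rfl this, Finset.prod_mul_distrib, Finset.prod_const,
    ← Real.exp_nat_mul, ← Finset.prod_pow, Finset.card_univ, Fintype.card_fin]
  congr 2
  ring

lemma measurable_altDensity (n : ℕ) (δ : ℝ) (μ : Fin n → ℝ) :
    Measurable (altDensity n δ μ) := by
  unfold altDensity
  exact Finset.measurable_prod _ fun i _ =>
    (measurable_gaussianPDFReal _ _).comp (measurable_pi_apply i)

lemma measurable_nullDensity (n : ℕ) (μ : Fin n → ℝ) :
    Measurable (nullDensity n μ) := by
  unfold nullDensity
  exact Finset.measurable_prod _ fun i _ =>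
    (measurable_gaussianPDFReal _ _).comp (measurable_pi_apply i)

lemma pointwise_bound (n : ℕ) (δ : ℝ) (μ : Fin n → ℝ) (hμ : ∀ i, 0 < μ i)
    (y : Fin n → ℝ) (hy : y ∈ reflNegRegion n δ μ) :
    altDensity n δ μ y ≤ Real.exp (-(n * δ ^ 2) / 2) * nullDensity n μ y := by
  set a := altDensity n δ μ y with ha
  set b := altDensity n δ μ (-y) with hb
  have hab : a < b := hy
  have ha0 : 0 ≤ a := alt_nonneg _ _ _ _
  have hrhs0 : 0 ≤ Real.exp (-(n * δ ^ 2) / 2) * nullDensity n μ y :=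
    mul_nonneg (Real.exp_nonneg _) (null_nonneg _ _ _)
  have hsq : a ^ 2 ≤ (Real.exp (-(n * δ ^ 2) / 2) * nullDensity n μ y) ^ 2 := by
    have h1 : a ^ 2 ≤ a * b := by
      rw [sq]; exact mul_le_mul_of_nonneg_left hab.le ha0
    calc a ^ 2 ≤ a * b := h1
      _ = Real.exp (-(n * δ ^ 2)) * (nullDensity n μ y) ^ 2 := alt_mul_alt_neg n δ μ hμ y
      _ = (Real.exp (-(n * δ ^ 2) / 2) * nullDensity n μ y) ^ 2 := by
          rw [mul_pow, ← Real.exp_nat_mul]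
          congr 2
          push_cast
          ring
  calc a = Real.sqrt (a ^ 2) := (Real.sqrt_sq ha0).symm
    _ ≤ Real.sqrt ((Real.exp (-(n * δ ^ 2) / 2) * nullDensity n μ y) ^ 2) :=
        Real.sqrt_le_sqrt hsq
    _ = Real.exp (-(n * δ ^ 2) / 2) * nullDensity n μ y := Real.sqrt_sq hrhs0

/-- On Y⁻ the alternative rejection mass of any test φ is controlled by its null rejection
mass: ∫_{Y⁻} φ f₁ ≤ exp(−nδ²/2)·∫_{Y⁻} φ f₀; in particular a size contribution of α/2 on
Y⁻ gives an alternative contribution of at most (α/2)·exp(−nδ²/2). -/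
theorem alt_mass_le_null_mass_on_reflNeg (n : ℕ) (hn : 1 ≤ n)
    (δ : ℝ) (hδ : 0 < δ) (μ : Fin n → ℝ) (hμ : ∀ i, 0 < μ i)
    (φ : (Fin n → ℝ) → ℝ) (hφm : Measurable φ) (hφ01 : ∀ y, φ y ∈ Set.Icc (0:ℝ) 1) :
    ((∫ y in reflNegRegion n δ μ, φ y * altDensity n δ μ y)
        ≤ Real.exp (-(n * δ ^ 2) / 2) * ∫ y in reflNegRegion n δ μ, φ y * nullDensity n μ y) ∧
    (∀ α : ℝ, (∫ y in reflNegRegion n δ μ, φ y * nullDensity n μ y) ≤ α / 2 →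
      (∫ y in reflNegRegion n δ μ, φ y * altDensity n δ μ y)
        ≤ (α / 2) * Real.exp (-(n * δ ^ 2) / 2)) := by
  have hs : MeasurableSet (reflNegRegion n δ μ) :=
    measurableSet_lt (measurable_altDensity n δ μ)
      ((measurable_altDensity n δ μ).comp measurable_neg)
  have hnull_int : Integrable (nullDensity n μ) := by
    unfold nullDensity
    exact Integrable.fin_nat_prod fun i => integrable_gaussianPDFReal _ _
  have hφnull_int : Integrable (fun y => φ y * nullDensity n μ y) := by
    refine (hnull_int.mono ((hφm.mul (measurable_nullDensity n μ)).aestronglyMeasurable)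
      (ae_of_all _ fun y => ?_))
    rw [Real.norm_eq_abs, Real.norm_eq_abs, abs_of_nonneg (null_nonneg n μ y),
      abs_of_nonneg (mul_nonneg (hφ01 y).1 (null_nonneg n μ y))]
    calc φ y * nullDensity n μ y ≤ 1 * nullDensity n μ y :=
          mul_le_mul_of_nonneg_right (hφ01 y).2 (null_nonneg n μ y)
      _ = nullDensity n μ y := one_mul _
  have h1 : (∫ y in reflNegRegion n δ μ, φ y * altDensity n δ μ y)
      ≤ Real.exp (-(n * δ ^ 2) / 2) * ∫ y in reflNegRegion n δ μ, φ y * nullDensity n μ y := by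
    rw [← MeasureTheory.integral_const_mul]
    refine integral_mono_of_nonneg (ae_of_all _ fun y =>
        mul_nonneg (hφ01 y).1 (alt_nonneg n δ μ y))
      ((hφnull_int.const_mul _).restrict) ?_
    filter_upwards [ae_restrict_mem hs] with y hy
    calc φ y * altDensity n δ μ y
        ≤ φ y * (Real.exp (-(n * δ ^ 2) / 2) * nullDensity n μ y) :=
          mul_le_mul_of_nonneg_left (pointwise_bound n δ μ hμ y hy) (hφ01 y).1
      _ = Real.exp (-(n * δ ^ 2) / 2) * (φ y * nullDensity n μ y) := by ring
  refine ⟨h1, fun α hα => ?_⟩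
  calc (∫ y in reflNegRegion n δ μ, φ y * altDensity n δ μ y)
      ≤ Real.exp (-(n * δ ^ 2) / 2) * ∫ y in reflNegRegion n δ μ, φ y * nullDensity n μ y := h1
    _ ≤ Real.exp (-(n * δ ^ 2) / 2) * (α / 2) :=
        mul_le_mul_of_nonneg_left hα (Real.exp_nonneg _)
    _ = (α / 2) * Real.exp (-(n * δ ^ 2) / 2) := mul_comm _ _
end

section
/- Let n ≥ 1 and m ≥ 0, let O be a finite index set, and for each o ∈ O let p^o, q^o : ℤⁿ → [0,∞) be supported on the cube {−m, …, m}ⁿ with Σ_b p^o(b) = Σ_b q^o(b) = 1, and let φ^o : ℤⁿ → [0,1]. Then the infimum over d ∈ ℤⁿ of Σ_{o ∈ O} Σ_{b ∈ ℤⁿ} φ^o(d + b)·q^o(b) is at most the supremum over d ∈ ℤⁿ of Σ_{o ∈ O} Σ_{b ∈ ℤⁿ} φ^o(d + b)·p^o(b). -/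
open Finset

lemma sum_shift_bound {n : ℕ} (N m : ℕ) (hm : 2*m ≤ N)
    (φ : (Fin n → ℤ) → ℝ) (hφ : ∀ x, φ x ∈ Set.Icc (0:ℝ) 1)
    (b : Fin n → ℤ) (hb : ∀ i, |b i| ≤ (m:ℤ)) :
    |(∑ d ∈ Fintype.piFinset (fun _ : Fin n => Finset.Ico (0:ℤ) (N:ℤ)), φ (d + b))
      - ∑ d ∈ Fintype.piFinset (fun _ : Fin n => Finset.Ico (0:ℤ) (N:ℤ)), φ d|
      ≤ (N:ℝ)^n - ((N:ℝ) - 2*m)^n := by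
  classical
  set D : Finset (Fin n → ℤ) := Fintype.piFinset (fun _ : Fin n => Finset.Ico (0:ℤ) (N:ℤ)) with hD
  set A : Finset (Fin n → ℤ) := D.map (Equiv.addRight b).toEmbedding with hA
  set E : Finset (Fin n → ℤ) := Fintype.piFinset (fun _ : Fin n => Finset.Ico (m:ℤ) ((N:ℤ) - m)) with hE
  have hmem : ∀ i, ∀ x : Fin n → ℤ, x ∈ E → (m:ℤ) ≤ x i ∧ x i < (N:ℤ) - m := by
    intro i x hx
    rw [hE, Fintype.mem_piFinset] at hx
    have := hx i
    rw [Finset.mem_Ico] at this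
    exact this
  have hED : E ⊆ D := by
    intro x hx
    rw [hD, Fintype.mem_piFinset]
    intro i
    rw [Finset.mem_Ico]
    have h1 := hmem i x hx
    have h2 := hb i
    have hm' : (2*m : ℤ) ≤ N := by exact_mod_cast hm
    omega
  have hEA : E ⊆ A := by
    intro x hx
    rw [hA, Finset.mem_map_equiv]
    rw [hD, Fintype.mem_piFinset]
    intro i
    rw [Finset.mem_Ico]
    have h1 := hmem i x hx
    have h2 := hb i
    have hm' : (2*m : ℤ) ≤ N := by exact_mod_cast hm
    simp only [Equiv.addRight_symm, Equiv.coe_addRight, Pi.add_apply, Pi.neg_apply]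
    have := abs_le.mp h2
    omega
  have hsum : ∑ d ∈ D, φ (d + b) = ∑ x ∈ A, φ x := by
    rw [hA, Finset.sum_map]
    simp [Equiv.coe_addRight]
  have hcardD : D.card = N^n := by
    rw [hD, Fintype.card_piFinset]
    simp [Int.card_Ico]
  have hcardA : A.card = N^n := by rw [hA, Finset.card_map, hcardD]
  have hcardE : E.card = (N - 2*m)^n := by
    rw [hE, Fintype.card_piFinset]
    have : ((N:ℤ) - m - m).toNat = N - 2*m := by omega
    simp [Int.card_Ico, this]
  have hsplitA : ∑ x ∈ A, φ x = ∑ x ∈ A \ E, φ x + ∑ x ∈ E, φ x := (Finset.sum_sdiff hEA).symm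
  have hsplitD : ∑ x ∈ D, φ x = ∑ x ∈ D \ E, φ x + ∑ x ∈ E, φ x := (Finset.sum_sdiff hED).symm
  have hcast : ((N - 2*m : ℕ) : ℝ) = (N:ℝ) - 2*m := by
    push_cast [Nat.cast_sub hm]; ring
  have hboundA : ∑ x ∈ A \ E, φ x ≤ (N:ℝ)^n - ((N:ℝ) - 2*m)^n := by
    calc ∑ x ∈ A \ E, φ x ≤ (A \ E).card • (1:ℝ) :=
          Finset.sum_le_card_nsmul _ _ _ (fun x _ => (hφ x).2)
      _ = ((A \ E).card : ℝ) := by simp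
      _ = (N:ℝ)^n - ((N:ℝ) - 2*m)^n := by
          rw [Finset.card_sdiff_of_subset hEA, hcardA, hcardE,
            Nat.cast_sub (Nat.pow_le_pow_left (by omega) n), Nat.cast_pow, Nat.cast_pow, hcast]
  have hboundD : ∑ x ∈ D \ E, φ x ≤ (N:ℝ)^n - ((N:ℝ) - 2*m)^n := by
    calc ∑ x ∈ D \ E, φ x ≤ (D \ E).card • (1:ℝ) :=
          Finset.sum_le_card_nsmul _ _ _ (fun x _ => (hφ x).2)
      _ = ((D \ E).card : ℝ) := by simp
      _ = (N:ℝ)^n - ((N:ℝ) - 2*m)^n := by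
          rw [Finset.card_sdiff_of_subset hED, hcardD, hcardE,
            Nat.cast_sub (Nat.pow_le_pow_left (by omega) n), Nat.cast_pow, Nat.cast_pow, hcast]
  have h0A : 0 ≤ ∑ x ∈ A \ E, φ x := Finset.sum_nonneg fun x _ => (hφ x).1
  have h0D : 0 ≤ ∑ x ∈ D \ E, φ x := Finset.sum_nonneg fun x _ => (hφ x).1
  rw [hsum, hsplitA, hsplitD]
  rw [abs_sub_le_iff]
  constructor <;> linarith

/-- The key averaging inequality underlying the maximin optimality of the sign test over
simple tests: for finitely supported probability weights p^o, q^o on the cube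
{−m,…,m}ⁿ ⊆ ℤⁿ and test values φ^o ∈ [0,1],
inf_d Σ_o Σ_b φ^o(d+b)·q^o(b) ≤ sup_d Σ_o Σ_b φ^o(d+b)·p^o(b). -/
theorem averaging_inequality (n : ℕ) (hn : 1 ≤ n) (m : ℕ) (O : Type*) [Fintype O]
    (p q : O → (Fin n → ℤ) → ℝ)
    (hp0 : ∀ o b, 0 ≤ p o b) (hq0 : ∀ o b, 0 ≤ q o b)
    (hpsupp : ∀ o (b : Fin n → ℤ), (∃ i, (m : ℤ) < |b i|) → p o b = 0)
    (hqsupp : ∀ o (b : Fin n → ℤ), (∃ i, (m : ℤ) < |b i|) → q o b = 0)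
    (hp1 : ∀ o, ∑' b, p o b = 1) (hq1 : ∀ o, ∑' b, q o b = 1)
    (φ : O → (Fin n → ℤ) → ℝ) (hφ : ∀ o b, φ o b ∈ Set.Icc (0:ℝ) 1) :
    (⨅ d : Fin n → ℤ, ∑ o : O, ∑' b, φ o (d + b) * q o b)
      ≤ ⨆ d : Fin n → ℤ, ∑ o : O, ∑' b, φ o (d + b) * p o b := by
  classical
  set C : Finset (Fin n → ℤ) := Fintype.piFinset (fun _ : Fin n => Finset.Icc (-(m:ℤ)) (m:ℤ)) with hC
  have hmemC : ∀ b : Fin n → ℤ, b ∉ C → ∃ i, (m:ℤ) < |b i| := by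
    intro b hb
    rw [hC, Fintype.mem_piFinset] at hb
    push_neg at hb
    obtain ⟨i, hi⟩ := hb
    rw [Finset.mem_Icc] at hi
    refine ⟨i, ?_⟩
    rw [lt_abs]
    omega
  have hqsum : ∀ o (d : Fin n → ℤ), ∑' b, φ o (d + b) * q o b = ∑ b ∈ C, φ o (d + b) * q o b :=
    fun o d => tsum_eq_sum (fun b hb => by rw [hqsupp o b (hmemC b hb), mul_zero])
  have hpsum : ∀ o (d : Fin n → ℤ), ∑' b, φ o (d + b) * p o b = ∑ b ∈ C, φ o (d + b) * p o b :=
    fun o d => tsum_eq_sum (fun b hb => by rw [hpsupp o b (hmemC b hb), mul_zero])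
  have hq1' : ∀ o, ∑ b ∈ C, q o b = 1 := fun o => by
    rw [← tsum_eq_sum (L := SummationFilter.unconditional _) (fun b hb => hqsupp o b (hmemC b hb))]; exact hq1 o
  have hp1' : ∀ o, ∑ b ∈ C, p o b = 1 := fun o => by
    rw [← tsum_eq_sum (L := SummationFilter.unconditional _) (fun b hb => hpsupp o b (hmemC b hb))]; exact hp1 o
  set F : (Fin n → ℤ) → ℝ := fun d => ∑ o : O, ∑ b ∈ C, φ o (d + b) * q o b with hF
  set G : (Fin n → ℤ) → ℝ := fun d => ∑ o : O, ∑ b ∈ C, φ o (d + b) * p o b with hG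
  have hFr : (⨅ d : Fin n → ℤ, ∑ o : O, ∑' b, φ o (d + b) * q o b) = ⨅ d, F d :=
    iInf_congr fun d => Finset.sum_congr rfl fun o _ => hqsum o d
  have hGr : (⨆ d : Fin n → ℤ, ∑ o : O, ∑' b, φ o (d + b) * p o b) = ⨆ d, G d :=
    iSup_congr fun d => Finset.sum_congr rfl fun o _ => hpsum o d
  rw [hFr, hGr]
  set K : ℝ := (Fintype.card O : ℝ) with hK
  have hK0 : 0 ≤ K := by positivity
  have hF0 : ∀ d, 0 ≤ F d := fun d =>
    Finset.sum_nonneg fun o _ => Finset.sum_nonneg fun b _ => mul_nonneg (hφ o _).1 (hq0 o b)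
  have hGK : ∀ d, G d ≤ K := by
    intro d
    have : ∀ o : O, ∑ b ∈ C, φ o (d + b) * p o b ≤ 1 := by
      intro o
      calc ∑ b ∈ C, φ o (d + b) * p o b ≤ ∑ b ∈ C, p o b :=
            Finset.sum_le_sum fun b _ => mul_le_of_le_one_left (hp0 o b) (hφ o _).2
        _ = 1 := hp1' o
    calc G d ≤ ∑ _o : O, (1:ℝ) := Finset.sum_le_sum fun o _ => this o
      _ = K := by simp [hK]
  have hbddF : BddBelow (Set.range F) := ⟨0, by rintro x ⟨d, rfl⟩; exact hF0 d⟩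
  have hbddG : BddAbove (Set.range G) := ⟨K, by rintro x ⟨d, rfl⟩; exact hGK d⟩
  -- reduce to ε-approximation
  by_contra hcon
  push_neg at hcon
  set ε : ℝ := ((⨅ d, F d) - ⨆ d, G d) / 2 with hε
  have hεpos : 0 < ε := by simp only [hε]; linarith
  have hmain : (⨅ d, F d) ≤ (⨆ d, G d) + ε := by
    -- choose N
    set N : ℕ := max (2*m+1) ⌈4*K*m*n/ε⌉₊ with hN
    have hN2m : 2*m < N := lt_of_lt_of_le (Nat.lt_succ_self _) (le_max_left _ _)
    have hNpos : (0:ℝ) < N := by positivity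
    have hNε : 4*K*m*n/(N:ℝ) ≤ ε := by
      rw [div_le_iff₀ hNpos]
      have h1 : 4*K*m*n/ε ≤ (N:ℝ) := le_trans (Nat.le_ceil _)
        (by exact_mod_cast le_max_right (2*m+1) ⌈4*K*m*n/ε⌉₊)
      calc 4*K*m*n = (4*K*m*n/ε) * ε := by field_simp
        _ ≤ (N:ℝ) * ε := by
            apply mul_le_mul_of_nonneg_right h1 hεpos.le
        _ = ε * N := mul_comm _ _
    set D : Finset (Fin n → ℤ) := Fintype.piFinset (fun _ : Fin n => Finset.Ico (0:ℤ) (N:ℤ)) with hD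
    have hDcard : D.card = N^n := by rw [hD, Fintype.card_piFinset]; simp [Int.card_Ico]
    have hDne : D.Nonempty := by
      refine ⟨fun _ => 0, ?_⟩
      rw [hD, Fintype.mem_piFinset]
      intro i
      rw [Finset.mem_Ico]
      have hNp : 0 < N := by omega
      constructor
      · exact le_refl 0
      · exact_mod_cast hNp
    have hDc0 : (0:ℝ) < (D.card : ℝ) := by
      rw [hDcard]; push_cast; positivity
    set Err : ℝ := (N:ℝ)^n - ((N:ℝ) - 2*m)^n with hErr
    have hErr0 : 0 ≤ Err := by
      rw [hErr]
      have h1 : (0:ℝ) ≤ (N:ℝ) - 2*m := by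
        have : (2*m:ℝ) ≤ N := by exact_mod_cast hN2m.le
        linarith
      have := pow_le_pow_left₀ h1 (by linarith : (N:ℝ) - 2*m ≤ N) n
      linarith
    -- Bernoulli bound: Err * N ≤ 2*m*n*N^n
    have hErrN : Err * (N:ℝ) ≤ 2*m*n*(N:ℝ)^n := by
      have hx : (N:ℝ) * (1 - (2*m)/N) = (N:ℝ) - 2*m := by field_simp
      have hber : 1 + (n:ℝ) * (-(2*(m:ℝ)/N)) ≤ (1 + (-(2*(m:ℝ)/N)))^n := by
        apply one_add_mul_le_pow
        have h1 : (2*(m:ℝ))/N ≤ 1 := by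
          rw [div_le_one hNpos]
          exact_mod_cast hN2m.le
        linarith
      have hpowN : (0:ℝ) ≤ (N:ℝ)^n := by positivity
      have hber' : (1:ℝ) - (n:ℝ)*(2*m/N) ≤ (1 - (2*(m:ℝ))/N)^n := by
        calc (1:ℝ) - (n:ℝ)*(2*m/N) = 1 + (n:ℝ)*(-(2*(m:ℝ)/N)) := by ring
          _ ≤ (1 + (-(2*(m:ℝ)/N)))^n := hber
          _ = (1 - (2*(m:ℝ))/N)^n := by ring_nf
      have h2 : (N:ℝ)^n * (1 - (n:ℝ)*(2*m/N)) ≤ ((N:ℝ) - 2*m)^n := by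
        rw [← hx, mul_pow]
        exact mul_le_mul_of_nonneg_left hber' hpowN
      have h3 : (N:ℝ)^n * ((n:ℝ)*(2*m/N)) * N = 2*m*n*(N:ℝ)^n * (N/N) := by ring
      have hNne : (N:ℝ) ≠ 0 := ne_of_gt hNpos
      rw [hErr]
      have : ((N:ℝ)^n - ((N:ℝ) - 2*m)^n) ≤ (N:ℝ)^n * ((n:ℝ)*(2*m/N)) := by linarith
      calc ((N:ℝ)^n - ((N:ℝ) - 2*m)^n) * N ≤ (N:ℝ)^n * ((n:ℝ)*(2*m/N)) * N :=
            mul_le_mul_of_nonneg_right this hNpos.le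
        _ = 2*m*n*(N:ℝ)^n * (N/N) := h3
        _ = 2*m*n*(N:ℝ)^n := by rw [div_self hNne, mul_one]
    -- shift sums
    set T : O → ℝ := fun o => ∑ d ∈ D, φ o d with hT
    have hshift : ∀ (o : O), ∀ b ∈ C, |(∑ d ∈ D, φ o (d + b)) - T o| ≤ Err := by
      intro o b hb
      apply sum_shift_bound N m hN2m.le (φ o) (hφ o)
      intro i
      rw [hC, Fintype.mem_piFinset] at hb
      have := hb i
      rw [Finset.mem_Icc] at this
      rw [abs_le]
      omega
    -- sum of F over D
    have hsumF : ∑ d ∈ D, F d ≤ ∑ o : O, (T o + Err) := by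
      rw [hF]
      rw [Finset.sum_comm]
      apply Finset.sum_le_sum
      intro o _
      rw [Finset.sum_comm]
      calc ∑ b ∈ C, ∑ d ∈ D, φ o (d + b) * q o b
          = ∑ b ∈ C, (∑ d ∈ D, φ o (d + b)) * q o b := by
            apply Finset.sum_congr rfl
            intro b _
            rw [Finset.sum_mul]
        _ ≤ ∑ b ∈ C, (T o + Err) * q o b := by
            apply Finset.sum_le_sum
            intro b hb
            apply mul_le_mul_of_nonneg_right _ (hq0 o b)
            have := (abs_le.mp (hshift o b hb)).2
            linarith
        _ = (T o + Err) * ∑ b ∈ C, q o b := by rw [Finset.mul_sum]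
        _ = T o + Err := by rw [hq1' o, mul_one]
    have hsumG : ∑ o : O, (T o - Err) ≤ ∑ d ∈ D, G d := by
      rw [hG]
      rw [Finset.sum_comm]
      apply Finset.sum_le_sum
      intro o _
      rw [Finset.sum_comm]
      calc T o - Err = (T o - Err) * ∑ b ∈ C, p o b := by rw [hp1' o, mul_one]
        _ = ∑ b ∈ C, (T o - Err) * p o b := by rw [Finset.mul_sum]
        _ ≤ ∑ b ∈ C, (∑ d ∈ D, φ o (d + b)) * p o b := by
            apply Finset.sum_le_sum
            intro b hb
            apply mul_le_mul_of_nonneg_right _ (hp0 o b)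
            have := (abs_le.mp (hshift o b hb)).1
            linarith
        _ = ∑ b ∈ C, ∑ d ∈ D, φ o (d + b) * p o b := by
            apply Finset.sum_congr rfl
            intro b _
            rw [Finset.sum_mul]
    have hFG : ∑ d ∈ D, F d ≤ ∑ d ∈ D, G d + 2*K*Err := by
      have : ∑ o : O, (T o + Err) = ∑ o : O, (T o - Err) + 2*K*Err := by
        rw [Finset.sum_add_distrib, Finset.sum_sub_distrib]
        simp [hK]
        ring
      linarith
    -- average argument
    have hd0 : ∃ d0 ∈ D, F d0 ≤ (∑ d ∈ D, G d + 2*K*Err) / D.card := by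
      apply Finset.exists_le_of_sum_le hDne
      rw [Finset.sum_const, nsmul_eq_mul]
      rw [mul_div_cancel₀ _ (ne_of_gt hDc0)]
      exact hFG
    have hd1 : ∃ d1 ∈ D, (∑ d ∈ D, G d) / D.card ≤ G d1 := by
      have h := Finset.exists_le_of_sum_le hDne (f := fun _ => (∑ d ∈ D, G d) / D.card) (g := G) ?_
      · exact h
      · rw [Finset.sum_const, nsmul_eq_mul, mul_div_cancel₀ _ (ne_of_gt hDc0)]
    obtain ⟨d0, _, hd0⟩ := hd0
    obtain ⟨d1, _, hd1⟩ := hd1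
    have herr : 2*K*Err / D.card ≤ ε := by
      rw [hDcard]
      push_cast
      have hNn : (0:ℝ) < (N:ℝ)^n := by positivity
      rw [div_le_iff₀ hNn]
      have hNn1 : (N:ℝ)^n = (N:ℝ)^(n-1) * N := by
        rw [← pow_succ]
        congr 1
        omega
      -- 2*K*Err ≤ ε * N^n  ⟸  Err*N ≤ 2mn*N^n and 4Kmn/N ≤ ε
      have h1 : 2*K*(Err*N) ≤ 2*K*(2*m*n*(N:ℝ)^n) := by
        apply mul_le_mul_of_nonneg_left hErrN (by positivity)
      have h2 : 4*K*m*n ≤ ε * N := by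
        rw [div_le_iff₀ hNpos] at hNε
        linarith
      have h3 : 2*K*(2*m*(n:ℝ)*(N:ℝ)^n) = (4*K*m*n) * (N:ℝ)^n := by ring
      have h4 : (4*K*m*n) * (N:ℝ)^n ≤ (ε*N) * (N:ℝ)^n := by
        apply mul_le_mul_of_nonneg_right h2 hNn.le
      -- 2*K*Err*N ≤ ε*N*N^n, divide by N
      have h5 : 2*K*Err*N ≤ ε*(N:ℝ)^n*N := by
        calc 2*K*Err*N = 2*K*(Err*N) := by ring
          _ ≤ (4*K*m*n) * (N:ℝ)^n := by rw [← h3]; exact h1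
          _ ≤ (ε*N) * (N:ℝ)^n := h4
          _ = ε*(N:ℝ)^n*N := by ring
      have := mul_le_mul_of_nonneg_right h5 (le_of_lt (inv_pos.mpr hNpos))
      rw [mul_inv_cancel_right₀ (ne_of_gt hNpos), mul_inv_cancel_right₀ (ne_of_gt hNpos)] at this
      exact this
    calc (⨅ d, F d) ≤ F d0 := ciInf_le hbddF d0
      _ ≤ (∑ d ∈ D, G d + 2*K*Err) / D.card := hd0
      _ = (∑ d ∈ D, G d) / D.card + 2*K*Err / D.card := by rw [add_div]
      _ ≤ G d1 + ε := add_le_add hd1 herr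
      _ ≤ (⨆ d, G d) + ε := add_le_add_left (le_ciSup hbddG d1) ε
  rw [hε] at hmain
  linarith
end
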